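/- arXiv:1710.04632 — 8 statements merged into one kernel-verified Lean document; each statement's English description precedes it below -/
import Mathlib

section
/- Let R be a recollement of abelian categories with middle term A, left term Y and right term X. If A has all set-indexed products (is AB3*), then so do X and Y. -/
open CategoryTheory Limits

universe v u u₁ u₂ u₃

/-- A recollement of categories: adjoint triples `(i^*, i_*, i^!)` and `(j_!, j^*, j_*)`,
with `i_*`, `j_!`, `j_*` fully faithful and the essential image of `i_*` equal to the
kernel of `j^*`. -/
structure Recollement (Y : Type u₁) (A : Type u₂) (X : Type u₃)
    [Category.{v} Y] [Category.{v} A] [Category.{v} X] where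
  /-- `i_* : Y ⥤ A` -/
  iStar : Y ⥤ A
  /-- `i^* : A ⥤ Y` -/
  iUp : A ⥤ Y
  /-- `i^! : A ⥤ Y` -/
  iShriek : A ⥤ Y
  /-- `j^* : A ⥤ X` -/
  jUp : A ⥤ X
  /-- `j_! : X ⥤ A` -/
  jLower : X ⥤ A
  /-- `j_* : X ⥤ A` -/
  jRight : X ⥤ A
  adj_i₁ : iUp ⊣ iStar
  adj_i₂ : iStar ⊣ iShriek
  adj_j₁ : jLower ⊣ jUp
  adj_j₂ : jUp ⊣ jRight
  iStar_full : iStar.Full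
  iStar_faithful : iStar.Faithful
  jLower_full : jLower.Full
  jLower_faithful : jLower.Faithful
  jRight_full : jRight.Full
  jRight_faithful : jRight.Faithful
  essImage_iff : ∀ M : A, iStar.essImage M ↔ IsZero (jUp.obj M)

variable {Y : Type u₁} {A : Type u₂} {X : Type u₃}
  [Category.{v} Y] [Category.{v} A] [Category.{v} X]

/-- The class `C = Ker i^*` of the TTF triple associated to a recollement. -/
def Recollement.C (R : Recollement Y A X) : A → Prop := fun M => IsZero (R.iUp.obj M)

/-- The class `T = Im i_*` of the TTF triple associated to a recollement. -/
def Recollement.T (R : Recollement Y A X) : A → Prop := fun M => R.iStar.essImage M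

/-- The class `F = Ker i^!` of the TTF triple associated to a recollement. -/
def Recollement.F (R : Recollement Y A X) : A → Prop := fun M => IsZero (R.iShriek.obj M)

/-- An (additive) functor between abelian categories is exact if it preserves finite
limits and finite colimits. -/
def IsExactFunctor {C D : Type*} [Category C] [Category D] (G : C ⥤ D) : Prop :=
  Nonempty (PreservesFiniteLimits G) ∧ Nonempty (PreservesFiniteColimits G)

/-- If the middle term of a recollement of abelian categories is AB3*
(has all set-indexed products), then so are the outer terms. -/
theorem recollement_hasProducts [Abelian Y] [Abelian A] [Abelian X]
    (R : Recollement Y A X) [HasProducts.{v} A] :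
    HasProducts.{v} X ∧ HasProducts.{v} Y := by
  have hX : Reflective R.jRight :=
    { toFull := R.jRight_full, toFaithful := R.jRight_faithful, L := R.jUp, adj := R.adj_j₂ }
  have hY : Reflective R.iStar :=
    { toFull := R.iStar_full, toFaithful := R.iStar_faithful, L := R.iUp, adj := R.adj_i₁ }
  exact ⟨fun J => hasLimitsOfShape_of_reflective R.jRight,
    fun J => hasLimitsOfShape_of_reflective R.iStar⟩
end

section
/- In a recollement of abelian categories (Y, A, X), the functor i^* : A → Y is exact if and only if C ⊆ F, where (C, T, F) = (Ker(i^*), Im(i_*), Ker(i^!)) is the TTF triple associated to the recollement. -/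
open CategoryTheory Limits

universe v u u₁ u₂ u₃

variable {Y : Type u₁} {A : Type u₂} {X : Type u₃}
  [Category.{v} Y] [Category.{v} A] [Category.{v} X]

namespace Recollement

section Aux

variable [Abelian Y] [Abelian A] [Abelian X] (R : Recollement Y A X)

instance : R.iUp.IsLeftAdjoint := R.adj_i₁.isLeftAdjoint
instance : R.iStar.IsRightAdjoint := R.adj_i₁.isRightAdjoint
instance : R.iStar.IsLeftAdjoint := R.adj_i₂.isLeftAdjoint
instance : R.iShriek.IsRightAdjoint := R.adj_i₂.isRightAdjoint
instance : R.jUp.IsRightAdjoint := R.adj_j₁.isRightAdjoint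
instance : R.jUp.IsLeftAdjoint := R.adj_j₂.isLeftAdjoint

instance : PreservesColimitsOfSize.{0, 0} R.iUp :=
  R.adj_i₁.leftAdjoint_preservesColimits
instance : PreservesColimitsOfSize.{0, 0} R.jUp :=
  R.adj_j₂.leftAdjoint_preservesColimits
instance : PreservesLimitsOfSize.{0, 0} R.jUp :=
  R.adj_j₁.rightAdjoint_preservesLimits

/-- The image of `i_*` is contained in `T = Ker j^*`. -/
lemma jUp_iStar_isZero (Z : Y) : IsZero (R.jUp.obj (R.iStar.obj Z)) :=
  (R.essImage_iff _).1 ⟨Z, ⟨Iso.refl _⟩⟩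

/-- Membership in `C` via vanishing of maps into the image of `i_*`. -/
lemma c_iff (M : A) :
    IsZero (R.iUp.obj M) ↔ ∀ (Z : Y) (g : M ⟶ R.iStar.obj Z), g = 0 := by
  constructor
  · intro h Z g
    have h0 : (R.adj_i₁.homEquiv M Z).symm g = 0 := h.eq_zero_of_src _
    have : g = R.adj_i₁.homEquiv M Z ((R.adj_i₁.homEquiv M Z).symm g) :=
      (Equiv.apply_symm_apply _ _).symm
    rw [this, h0, Adjunction.homEquiv_unit, Functor.map_zero, comp_zero]
  · intro h
    rw [IsZero.iff_id_eq_zero]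
    have h1 : R.adj_i₁.unit.app M = 0 := h _ _
    have : 𝟙 (R.iUp.obj M) =
        (R.adj_i₁.homEquiv M (R.iUp.obj M)).symm (R.adj_i₁.unit.app M) := by
      rw [Adjunction.homEquiv_counit, R.adj_i₁.left_triangle_components]
    rw [this, h1, Adjunction.homEquiv_counit, Functor.map_zero, zero_comp]

/-- Membership in `F` via vanishing of maps from the image of `i_*`. -/
lemma f_iff (M : A) :
    IsZero (R.iShriek.obj M) ↔ ∀ (Z : Y) (g : R.iStar.obj Z ⟶ M), g = 0 := by
  constructor
  · intro h Z g
    have h0 : R.adj_i₂.homEquiv Z M g = 0 := h.eq_zero_of_tgt _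
    have : g = (R.adj_i₂.homEquiv Z M).symm (R.adj_i₂.homEquiv Z M g) :=
      (Equiv.symm_apply_apply _ _).symm
    rw [this, h0, Adjunction.homEquiv_counit, Functor.map_zero, zero_comp]
  · intro h
    rw [IsZero.iff_id_eq_zero]
    have h1 : R.adj_i₂.counit.app M = 0 := h _ _
    have : 𝟙 (R.iShriek.obj M) =
        R.adj_i₂.homEquiv (R.iShriek.obj M) M (R.adj_i₂.counit.app M) := by
      rw [Adjunction.homEquiv_unit, R.adj_i₂.right_triangle_components]
    rw [this, h1, Adjunction.homEquiv_unit, Functor.map_zero, comp_zero]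

/-- `C ∩ T = 0`. -/
lemma isZero_of_c_of_t (M : A) (hc : IsZero (R.iUp.obj M))
    (ht : IsZero (R.jUp.obj M)) : IsZero M := by
  obtain ⟨P, ⟨e⟩⟩ := (R.essImage_iff M).2 ht
  rw [IsZero.iff_id_eq_zero]
  have h0 : e.inv = 0 := (R.c_iff M).1 hc P e.inv
  rw [← e.inv_hom_id, h0, zero_comp]

/-- The unit `η : M ⟶ i_* i^* M` is an epimorphism. -/
lemma epi_unit_app (M : A) : Epi (R.adj_i₁.unit.app M) := by
  haveI := R.iStar_full
  haveI := R.iStar_faithful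
  set η := R.adj_i₁.unit.app M with hη
  -- `i^* η` is an isomorphism
  have tri : R.iUp.map η ≫ R.adj_i₁.counit.app (R.iUp.obj M) = 𝟙 _ :=
    R.adj_i₁.left_triangle_components M
  have hiso : IsIso (R.iUp.map η) := by
    haveI : IsIso (R.adj_i₁.counit.app (R.iUp.obj M)) := inferInstance
    exact IsIso.of_isIso_fac_right tri
  -- the cokernel of `η` is in `C`
  have hC : IsZero (R.iUp.obj (cokernel η)) := by
    refine IsZero.of_iso ?_ (PreservesCokernel.iso R.iUp η)
    haveI : Epi (R.iUp.map η) := @IsIso.epi_of_iso _ _ _ _ _ hiso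
    rw [IsZero.iff_id_eq_zero]
    have h0 : cokernel.π (R.iUp.map η) = 0 := by
      rw [← cancel_epi (R.iUp.map η), cokernel.condition, comp_zero]
    rw [← cancel_epi (cokernel.π (R.iUp.map η)), h0, zero_comp, comp_zero]
  -- the cokernel of `η` is in `T`
  have hT : IsZero (R.jUp.obj (cokernel η)) :=
    IsZero.of_epi (R.jUp.map (cokernel.π η)) (R.jUp_iStar_isZero _)
  have hzero : IsZero (cokernel η) := R.isZero_of_c_of_t _ hC hT
  exact Preadditive.epi_of_isZero_cokernel' _ (cokernelIsCokernel η) hzero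

/-- The kernel of the unit `η_N : N ⟶ i_* i^* N` lies in `C`. -/
lemma kernel_unit_mem_c (N : A) :
    IsZero (R.iUp.obj (kernel (R.adj_i₁.unit.app N))) := by
  rw [R.c_iff]
  intro Z f
  -- `j^*` of the kernel inclusion `m` is an epimorphism
  have hepi : Epi (R.jUp.map (kernel.ι (R.adj_i₁.unit.app N))) := by
    have h1 : IsZero (R.jUp.obj (Abelian.image (R.adj_i₁.unit.app N))) :=
      IsZero.of_mono (R.jUp.map (Abelian.image.ι (R.adj_i₁.unit.app N)))
        (R.jUp_iStar_isZero _)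
    have h2 : IsZero (R.jUp.obj (cokernel (kernel.ι (R.adj_i₁.unit.app N)))) :=
      IsZero.of_iso h1 (R.jUp.mapIso (Abelian.coimageIsoImage (R.adj_i₁.unit.app N)))
    have h3 : IsZero (cokernel (R.jUp.map (kernel.ι (R.adj_i₁.unit.app N)))) :=
      IsZero.of_iso h2 (PreservesCokernel.iso R.jUp _).symm
    exact Preadditive.epi_of_isZero_cokernel' _ (cokernelIsCokernel _) h3
  -- the pushout of `f` and `m` lies in `T`
  have hz : IsZero (R.jUp.obj (pushout f (kernel.ι (R.adj_i₁.unit.app N)))) := by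
    refine IsZero.of_iso ?_ (PreservesPushout.iso R.jUp f _).symm
    have hinl : pushout.inl (R.jUp.map f)
        (R.jUp.map (kernel.ι (R.adj_i₁.unit.app N))) = 0 :=
      (R.jUp_iStar_isZero Z).eq_zero_of_src _
    have hinr : pushout.inr (R.jUp.map f)
        (R.jUp.map (kernel.ι (R.adj_i₁.unit.app N))) = 0 := by
      have hc := (pushout.condition (f := R.jUp.map f)
        (g := R.jUp.map (kernel.ι (R.adj_i₁.unit.app N)))).symm
      rw [hinl, comp_zero] at hc
      exact (cancel_epi (R.jUp.map (kernel.ι (R.adj_i₁.unit.app N)))).1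
        (by rw [hc, comp_zero])
    rw [IsZero.iff_id_eq_zero]
    apply pushout.hom_ext <;> simp [hinl, hinr]
  obtain ⟨P, ⟨e⟩⟩ := (R.essImage_iff _).2 hz
  -- `m ≫ inr = 0` since `inr` factors through the unit
  have key : kernel.ι (R.adj_i₁.unit.app N) ≫
      pushout.inr f (kernel.ι (R.adj_i₁.unit.app N)) = 0 := by
    have hfac : pushout.inr f (kernel.ι (R.adj_i₁.unit.app N)) =
        (pushout.inr f (kernel.ι (R.adj_i₁.unit.app N)) ≫ e.inv) ≫ e.hom := by simp
    have hmr : kernel.ι (R.adj_i₁.unit.app N) ≫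
        (pushout.inr f (kernel.ι (R.adj_i₁.unit.app N)) ≫ e.inv) = 0 := by
      have expand : pushout.inr f (kernel.ι (R.adj_i₁.unit.app N)) ≫ e.inv =
          R.adj_i₁.unit.app N ≫ R.iStar.map ((R.adj_i₁.homEquiv N P).symm
            (pushout.inr f (kernel.ι (R.adj_i₁.unit.app N)) ≫ e.inv)) := by
        conv_lhs => rw [← Equiv.apply_symm_apply (R.adj_i₁.homEquiv N P)
          (pushout.inr f (kernel.ι (R.adj_i₁.unit.app N)) ≫ e.inv)]
        rw [Adjunction.homEquiv_unit]
      rw [expand, ← Category.assoc, kernel.condition, zero_comp]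
    rw [hfac, ← Category.assoc, hmr, zero_comp]
  have h0 : f ≫ pushout.inl f (kernel.ι (R.adj_i₁.unit.app N)) = 0 := by
    rw [pushout.condition, key]
  exact zero_of_comp_mono (pushout.inl f (kernel.ι (R.adj_i₁.unit.app N))) h0

variable {R}

/-- If `C ⊆ F`, then `C` is closed under subobjects. -/
lemma c_of_mono (hyp : ∀ M : A, IsZero (R.iUp.obj M) → IsZero (R.iShriek.obj M))
    {V W : A} (v : V ⟶ W) [Mono v] (hW : IsZero (R.iUp.obj W)) :
    IsZero (R.iUp.obj V) := by
  rw [R.c_iff]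
  intro Z f
  set η := R.adj_i₁.unit.app (pushout f v) with hη
  set s : R.iStar.obj Z ⟶ R.iStar.obj (R.iUp.obj (pushout f v)) :=
    pushout.inl f v ≫ η with hs
  have hK : IsZero (R.iShriek.obj (kernel η)) := hyp _ (R.kernel_unit_mem_c _)
  -- `s` is mono
  have hsm : Mono s := by
    have hkT : IsZero (R.jUp.obj (kernel s)) :=
      IsZero.of_mono (R.jUp.map (kernel.ι s)) (R.jUp_iStar_isZero Z)
    obtain ⟨P', ⟨e'⟩⟩ := (R.essImage_iff _).2 hkT
    have hcond : (kernel.ι s ≫ pushout.inl f v) ≫ η = 0 := by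
      rw [Category.assoc, ← hs, kernel.condition]
    set d : kernel s ⟶ kernel η := kernel.lift η _ hcond with hd
    have hdι : d ≫ kernel.ι η = kernel.ι s ≫ pushout.inl f v :=
      kernel.lift_ι _ _ _
    have h0 : e'.hom ≫ d = 0 := (R.f_iff _).1 hK P' _
    have hd0 : d = 0 := by
      rw [← Iso.inv_hom_id_assoc e' d, h0, comp_zero]
    have hcomp : kernel.ι s ≫ pushout.inl f v = 0 := by
      rw [← hdι, hd0, zero_comp]
    have hι0 : kernel.ι s = 0 := zero_of_comp_mono (pushout.inl f v) hcomp
    exact Preadditive.mono_of_kernel_zero hι0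
  -- `f ≫ s = 0`
  have hfs : f ≫ s = 0 := by
    rw [hs, ← Category.assoc, pushout.condition, Category.assoc,
      (R.c_iff W).1 hW _ (pushout.inr f v ≫ η), comp_zero]
  exact zero_of_comp_mono s hfs

/-- If `C ⊆ F`, then `i^*` preserves monomorphisms. -/
lemma iUp_map_mono (hyp : ∀ M : A, IsZero (R.iUp.obj M) → IsZero (R.iShriek.obj M))
    {M N : A} (u : M ⟶ N) [Mono u] : Mono (R.iUp.map u) := by
  haveI := R.iStar_faithful
  set k : kernel (R.iUp.map u) ⟶ R.iUp.obj M := kernel.ι _ with hk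
  set g := R.iStar.map k with hg
  haveI : Epi (R.adj_i₁.unit.app M) := R.epi_unit_app M
  set fst := pullback.fst (R.adj_i₁.unit.app M) g with hfst
  set snd := pullback.snd (R.adj_i₁.unit.app M) g with hsnd
  -- `fst ≫ u` factors through `kernel η_N`
  have ht : (fst ≫ u) ≫ R.adj_i₁.unit.app N = 0 := by
    rw [Category.assoc, ← R.adj_i₁.unit_naturality u, ← Category.assoc,
      pullback.condition, Category.assoc]
    have h00 : g ≫ R.iStar.map (R.iUp.map u) = 0 := by
      rw [hg, ← R.iStar.map_comp, kernel.condition, Functor.map_zero]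
    rw [h00, comp_zero]
  set t' : pullback (R.adj_i₁.unit.app M) g ⟶ kernel (R.adj_i₁.unit.app N) :=
    kernel.lift _ _ ht with ht'
  have ht'ι : t' ≫ kernel.ι (R.adj_i₁.unit.app N) = fst ≫ u := kernel.lift_ι _ _ _
  haveI : Mono (fst ≫ u) := mono_comp _ _
  haveI : Mono (t' ≫ kernel.ι (R.adj_i₁.unit.app N)) := by
    rw [ht'ι]; infer_instance
  haveI : Mono t' := mono_of_mono t' (kernel.ι (R.adj_i₁.unit.app N))
  -- the pullback lies in `C`
  have hPC : IsZero (R.iUp.obj (pullback (R.adj_i₁.unit.app M) g)) :=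
    c_of_mono hyp t' (R.kernel_unit_mem_c N)
  -- transpose the epi `snd`
  set sh := (R.adj_i₁.homEquiv _ (kernel (R.iUp.map u))).symm snd with hsh
  have hfac : snd = R.adj_i₁.unit.app _ ≫ R.iStar.map sh := by
    conv_lhs => rw [← Equiv.apply_symm_apply (R.adj_i₁.homEquiv _ _) snd]
    rw [Adjunction.homEquiv_unit]
  haveI : Epi snd := inferInstance
  haveI h1 : Epi (R.iStar.map sh) := by
    rw [hfac] at this
    exact epi_of_epi (R.adj_i₁.unit.app _) _
  haveI h2 : Epi sh := R.iStar.epi_of_epi_map h1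
  have hker : IsZero (kernel (R.iUp.map u)) := IsZero.of_epi sh hPC
  exact Preadditive.mono_of_isZero_kernel _ hker

/-- If `C ⊆ F`, then `i^*` preserves kernels. -/
lemma iUp_preservesKernel
    (hyp : ∀ M : A, IsZero (R.iUp.obj M) → IsZero (R.iShriek.obj M))
    {M N : A} (f : M ⟶ N) : PreservesLimit (parallelPair f 0) R.iUp := by
  apply preservesLimit_of_preserves_limit_cone (kernelIsKernel f)
  refine (isLimitMapConeForkEquiv' R.iUp (kernel.condition f)).symm ?_
  have hqu : cokernel.π (kernel.ι f) ≫ Abelian.factorThruCoimage f = f :=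
    Abelian.coimage.fac f
  haveI hmu : Mono (R.iUp.map (Abelian.factorThruCoimage f)) :=
    iUp_map_mono hyp _
  haveI hmk : Mono (R.iUp.map (kernel.ι f)) := iUp_map_mono hyp _
  have hcolim : IsColimit (CokernelCofork.ofπ (R.iUp.map (cokernel.π (kernel.ι f)))
      (by rw [← R.iUp.map_comp, cokernel.condition, Functor.map_zero]) :
        Cofork (R.iUp.map (kernel.ι f)) 0) :=
    isColimitCoforkMapOfIsColimit' R.iUp (cokernel.condition (kernel.ι f))
      (cokernelIsCokernel (kernel.ι f))
  have hlim : IsLimit (KernelFork.ofι (R.iUp.map (kernel.ι f))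
      (CokernelCofork.condition _)) :=
    Abelian.monoIsKernelOfCokernel _ hcolim
  have hlim' : IsLimit (KernelFork.ofι (R.iUp.map (kernel.ι f))
      (by rw [← R.iUp.map_comp, cokernel.condition, Functor.map_zero]) :
        Fork (R.iUp.map (cokernel.π (kernel.ι f))) 0) := hlim
  have hcanc : ∀ {W' : Y} (g' : W' ⟶ R.iUp.obj M), g' ≫ R.iUp.map f = 0 →
      g' ≫ R.iUp.map (cokernel.π (kernel.ι f)) = 0 := by
    intro W' g' hg'
    refine (cancel_mono (R.iUp.map (Abelian.factorThruCoimage f))).1 ?_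
    rw [Category.assoc, ← R.iUp.map_comp, hqu, zero_comp]
    exact hg'
  refine KernelFork.IsLimit.ofι _ _
    (fun {W'} g' hg' => hlim'.lift (KernelFork.ofι g' (hcanc g' hg')))
    (fun {W'} g' hg' => ?_) (fun {W'} g' hg' l hl => ?_)
  · exact hlim'.fac (KernelFork.ofι g' (hcanc g' hg')) WalkingParallelPair.zero
  · rw [← cancel_mono (R.iUp.map (kernel.ι f)), hl]
    exact (hlim'.fac (KernelFork.ofι g' (hcanc g' hg'))
      WalkingParallelPair.zero).symm

/-- If `C ⊆ F`, then `i^*` is left exact. -/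
lemma iUp_preservesFiniteLimits
    (hyp : ∀ M : A, IsZero (R.iUp.obj M) → IsZero (R.iShriek.obj M)) :
    PreservesFiniteLimits R.iUp := by
  haveI : ∀ {M N : A} (f : M ⟶ N), PreservesLimit (parallelPair f 0) R.iUp :=
    fun f => iUp_preservesKernel hyp f
  exact Functor.preservesFiniteLimits_of_preservesKernels R.iUp

/-- If `i^*` is left exact then `C ⊆ F`. -/
lemma c_le_f_of_preservesFiniteLimits (hPL : PreservesFiniteLimits R.iUp)
    (M : A) (hc : IsZero (R.iUp.obj M)) : IsZero (R.iShriek.obj M) := by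
  rw [R.f_iff]
  intro Z g
  haveI := hPL
  have h1 : IsZero (R.jUp.obj (Abelian.image g)) :=
    IsZero.of_epi (R.jUp.map (Abelian.factorThruImage g)) (R.jUp_iStar_isZero Z)
  have h2 : IsZero (R.iUp.obj (Abelian.image g)) :=
    IsZero.of_mono (R.iUp.map (Abelian.image.ι g)) hc
  have h3 : IsZero (Abelian.image g) := R.isZero_of_c_of_t _ h2 h1
  rw [← Abelian.image.fac g, h3.eq_zero_of_src (Abelian.image.ι g), comp_zero]

end Aux

end Recollement

/-- In a recollement of abelian categories, `i^*` is exact iff `C ⊆ F`,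
where `(C, T, F) = (Ker i^*, Im i_*, Ker i^!)` is the associated TTF triple. -/
theorem recollement_iUp_exact_iff [Abelian Y] [Abelian A] [Abelian X]
    (R : Recollement Y A X) :
    IsExactFunctor R.iUp ↔ ∀ M : A, R.C M → R.F M := by
  constructor
  · rintro ⟨⟨hPL⟩, -⟩ M hc
    exact Recollement.c_le_f_of_preservesFiniteLimits hPL M hc
  · intro hyp
    refine ⟨⟨Recollement.iUp_preservesFiniteLimits hyp⟩, ⟨?_⟩⟩
    haveI : PreservesColimitsOfSize.{0, 0} R.iUp :=
      R.adj_i₁.leftAdjoint_preservesColimits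
    infer_instance
end

section
/- In a recollement of abelian categories (Y, A, X), the functor i^! : A → Y is exact if and only if F ⊆ C, where (C, T, F) = (Ker(i^*), Im(i_*), Ker(i^!)) is the associated TTF triple. -/
set_option linter.unusedSectionVars false
set_option linter.unnecessarySimpa false
set_option maxHeartbeats 1000000

open ZeroObject


open CategoryTheory Limits

universe v u u₁ u₂ u₃

variable {Y : Type u₁} {A : Type u₂} {X : Type u₃}
  [Category.{v} Y] [Category.{v} A] [Category.{v} X]

section Helpers
lemma isZero_of_isTerminal' {C : Type*} [Category C] [HasZeroMorphisms C] {T : C}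
    (h : IsTerminal T) : IsZero T := by
  rw [IsZero.iff_id_eq_zero]; exact h.hom_ext _ _

lemma isZero_of_isInitial' {C : Type*} [Category C] [HasZeroMorphisms C] {T : C}
    (h : IsInitial T) : IsZero T := by
  rw [IsZero.iff_id_eq_zero]; exact h.hom_ext _ _

lemma additive_of_finLim {C D : Type*} [Category C] [Category D] [Abelian C] [Abelian D]
    (F : C ⥤ D) [PreservesFiniteLimits F] : F.Additive := by
  have h0 : IsZero (F.obj (0 : C)) :=
    isZero_of_isTerminal' (IsTerminal.isTerminalObj F 0 (isZero_zero C).isTerminal)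
  haveI : F.PreservesZeroMorphisms := Functor.preservesZeroMorphisms_of_map_zero_object h0.isoZero
  haveI : HasBinaryBiproducts C := HasBinaryBiproducts.of_hasBinaryProducts
  haveI := preservesBinaryBiproducts_of_preservesBinaryProducts F
  exact Functor.additive_of_preservesBinaryBiproducts F

lemma additive_of_finColim {C D : Type*} [Category C] [Category D] [Abelian C] [Abelian D]
    (F : C ⥤ D) [PreservesFiniteColimits F] : F.Additive := by
  have h0 : IsZero (F.obj (0 : C)) :=
    isZero_of_isInitial' (IsInitial.isInitialObj F 0 (isZero_zero C).isInitial)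
  haveI : F.PreservesZeroMorphisms := Functor.preservesZeroMorphisms_of_map_zero_object h0.isoZero
  haveI : HasBinaryBiproducts C := HasBinaryBiproducts.of_hasBinaryCoproducts
  haveI := preservesBinaryBiproducts_of_preservesBinaryCoproducts F
  exact Functor.additive_of_preservesBinaryBiproducts F

lemma isZero_cokernel_of_epi' {C : Type*} [Category C] [Abelian C] {P Q : C}
    (f : P ⟶ Q) [Epi f] : IsZero (cokernel f) :=
  IsZero.of_epi_eq_zero (cokernel.π f) (zero_of_epi_comp f (by simp))

lemma isZero_kernel_of_mono' {C : Type*} [Category C] [Abelian C] {P Q : C}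
    (f : P ⟶ Q) [Mono f] : IsZero (kernel f) :=
  IsZero.of_mono_eq_zero (kernel.ι f) (zero_of_comp_mono f (by simp))

lemma epi_of_isZero_cokernel' {C : Type*} [Category C] [Abelian C] {P Q : C}
    (f : P ⟶ Q) (h : IsZero (cokernel f)) : Epi f :=
  Abelian.epi_of_cokernel_π_eq_zero _ (h.eq_zero_of_tgt _)
end Helpers

namespace Recollement

variable {Y : Type u₁} {A : Type u₂} {X : Type u₃}
  [Category.{v} Y] [Category.{v} A] [Category.{v} X]
  [Abelian Y] [Abelian A] [Abelian X] (R : Recollement Y A X)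

lemma isZero_jUp_iStar (W : Y) : IsZero (R.jUp.obj (R.iStar.obj W)) :=
  (R.essImage_iff _).1 ⟨W, ⟨Iso.refl _⟩⟩

lemma isZero_iShriek_jRight (x : X) : IsZero (R.iShriek.obj (R.jRight.obj x)) := by
  set Z := R.iShriek.obj (R.jRight.obj x)
  haveI : Subsingleton (R.jUp.obj (R.iStar.obj Z) ⟶ x) :=
    ⟨fun a b => (R.isZero_jUp_iStar Z).eq_of_src a b⟩
  haveI : Subsingleton (R.iStar.obj Z ⟶ R.jRight.obj x) :=
    (R.adj_j₂.homEquiv _ _).symm.subsingleton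
  haveI : Subsingleton (Z ⟶ Z) := (R.adj_i₂.homEquiv Z (R.jRight.obj x)).symm.subsingleton
  rw [IsZero.iff_id_eq_zero]
  exact Subsingleton.elim _ _

lemma counit_comp_unit_zero (M : A) :
    R.adj_i₂.counit.app M ≫ R.adj_j₂.unit.app M = 0 := by
  haveI : Subsingleton (R.jUp.obj (R.iStar.obj (R.iShriek.obj M)) ⟶ R.jUp.obj M) :=
    ⟨fun a b => (R.isZero_jUp_iStar _).eq_of_src a b⟩
  haveI : Subsingleton (R.iStar.obj (R.iShriek.obj M) ⟶ R.jRight.obj (R.jUp.obj M)) :=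
    (R.adj_j₂.homEquiv _ _).symm.subsingleton
  dsimp only [Functor.comp_obj, Functor.id_obj]
  exact Subsingleton.elim _ _

/-- every map from an object of `Im i_*` into `M` dies in `coker (ε'_M)`. -/
lemma essImage_comp_cokernel_counit {M : A} {K : A} (hK : R.iStar.essImage K)
    (k : K ⟶ M) : k ≫ cokernel.π (R.adj_i₂.counit.app M) = 0 := by
  obtain ⟨W, ⟨φ⟩⟩ := hK
  have h1 : φ.hom ≫ k =
      R.iStar.map ((R.adj_i₂.homEquiv W M) (φ.hom ≫ k)) ≫ R.adj_i₂.counit.app M := by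
    conv_lhs => rw [← (R.adj_i₂.homEquiv W M).symm_apply_apply (φ.hom ≫ k)]
    rw [Adjunction.homEquiv_counit]
  have h2 : (φ.hom ≫ k) ≫ cokernel.π (R.adj_i₂.counit.app M) = 0 := by
    rw [h1, Category.assoc, cokernel.condition, comp_zero]
  rw [Category.assoc] at h2
  exact (cancel_epi φ.hom).1 (by rw [h2, comp_zero])

lemma mono_counit (M : A) : Mono (R.adj_i₂.counit.app M) := by
  haveI := R.iStar_full; haveI := R.iStar_faithful
  haveI : PreservesLimits R.jUp := R.adj_j₁.rightAdjoint_preservesLimits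
  haveI : R.jUp.Additive := additive_of_finLim _
  set ε := R.adj_i₂.counit.app M
  apply Abelian.mono_of_kernel_ι_eq_zero
  have hZ : IsZero (R.jUp.obj (kernel ε)) := by
    have e : R.jUp.obj (kernel ε) ≅ kernel (R.jUp.map ε) := PreservesKernel.iso R.jUp ε
    exact IsZero.of_iso (IsZero.of_mono (kernel.ι (R.jUp.map ε)) (R.isZero_jUp_iStar _)) e
  obtain ⟨W, ⟨φ⟩⟩ := (R.essImage_iff _).2 hZ
  obtain ⟨g₀, hg₀⟩ := R.iStar.map_surjective (φ.hom ≫ kernel.ι ε)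
  haveI : R.iStar.Additive := by
    haveI : PreservesLimits R.iStar := R.adj_i₁.rightAdjoint_preservesLimits
    exact additive_of_finLim _
  have h1 : (R.adj_i₂.homEquiv W M).symm g₀ = 0 := by
    rw [Adjunction.homEquiv_counit, hg₀, Category.assoc, kernel.condition, comp_zero]
  have h0 : (R.adj_i₂.homEquiv W M).symm 0 = 0 := by
    rw [Adjunction.homEquiv_counit, Functor.map_zero, zero_comp]
  have h3 : g₀ = 0 := (R.adj_i₂.homEquiv W M).symm.injective (h1.trans h0.symm)
  have h4 : φ.hom ≫ kernel.ι ε = 0 := by rw [← hg₀, h3, Functor.map_zero]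
  exact (cancel_epi φ.hom).1 (by rw [h4, comp_zero])


open CategoryTheory.Abelian

/-- `ker (η_M) ≤ im (ε'_M)` where `η` is the unit of `j^* ⊣ j_*`. -/
lemma kernel_unit_comp_cokernel_counit (M : A) :
    kernel.ι (R.adj_j₂.unit.app M) ≫ cokernel.π (R.adj_i₂.counit.app M) = 0 := by
  haveI := R.jRight_full; haveI := R.jRight_faithful
  haveI : PreservesLimits R.jUp := R.adj_j₁.rightAdjoint_preservesLimits
  haveI : R.jUp.Additive := additive_of_finLim _
  set η := R.adj_j₂.unit.app M
  have hiso : IsIso (R.jUp.map η) := by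
    have tri := R.adj_j₂.left_triangle_components M
    haveI : IsIso (R.adj_j₂.counit.app (R.jUp.obj M)) := inferInstance
    haveI : IsIso (R.jUp.map η ≫ R.adj_j₂.counit.app (R.jUp.obj M)) := by
      rw [tri]; exact IsIso.id _
    exact IsIso.of_isIso_comp_right (R.jUp.map η) (R.adj_j₂.counit.app (R.jUp.obj M))
  have hZ : IsZero (R.jUp.obj (kernel η)) := by
    have e : R.jUp.obj (kernel η) ≅ kernel (R.jUp.map η) := PreservesKernel.iso R.jUp η
    exact IsZero.of_iso (isZero_kernel_of_mono' (R.jUp.map η)) e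
  exact R.essImage_comp_cokernel_counit ((R.essImage_iff _).2 hZ) _

open Pseudoelement in
/-- `coker (ε'_M)` embeds into `j_* j^* M`, hence is killed by `i^!`. -/
lemma isZero_iShriek_cokernel_counit (M : A) :
    IsZero (R.iShriek.obj (cokernel (R.adj_i₂.counit.app M))) := by
  haveI : PreservesLimits R.iShriek := R.adj_i₂.rightAdjoint_preservesLimits
  set ε := R.adj_i₂.counit.app M with hε
  set η := R.adj_j₂.unit.app M with hη
  have hcomp : ε ≫ η = 0 := R.counit_comp_unit_zero M
  have hmono : Mono (cokernel.desc ε η hcomp) := by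
    apply mono_of_zero_of_map_zero
    intro a ha
    obtain ⟨m, rfl⟩ := pseudo_surjective_of_epi (cokernel.π ε) a
    rw [← Pseudoelement.comp_apply, cokernel.π_desc] at ha
    obtain ⟨a', ha'⟩ := pseudo_exact_of_exact (ShortComplex.exact_kernel η) m ha
    have h2 : pseudoApply (kernel.ι η ≫ cokernel.π ε) a' = 0 := by
      rw [R.kernel_unit_comp_cokernel_counit M, Pseudoelement.zero_apply]
    rw [Pseudoelement.comp_apply] at h2
    rw [← ha']
    exact h2
  exact IsZero.of_mono (R.iShriek.map (cokernel.desc ε η hcomp)) (R.isZero_iShriek_jRight _)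


open Pseudoelement in
lemma epi_iShriek_map (h : ∀ M : A, IsZero (R.iShriek.obj M) → IsZero (R.iUp.obj M))
    {M N : A} (f : M ⟶ N) [Epi f] : Epi (R.iShriek.map f) := by
  haveI := R.iStar_full; haveI := R.iStar_faithful
  haveI : PreservesColimits R.iStar := R.adj_i₂.leftAdjoint_preservesColimits
  haveI : PreservesColimits R.iUp := R.adj_i₁.leftAdjoint_preservesColimits
  haveI : PreservesLimits R.iShriek := R.adj_i₂.rightAdjoint_preservesLimits
  haveI : R.iStar.Additive := by
    haveI : PreservesLimits R.iStar := R.adj_i₁.rightAdjoint_preservesLimits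
    exact additive_of_finLim _
  set εM := R.adj_i₂.counit.app M with hεM
  set εN := R.adj_i₂.counit.app N with hεN
  set a := R.iStar.map (R.iShriek.map f) with ha
  set g : R.iStar.obj (R.iShriek.obj M) ⟶ N := εM ≫ f with hg
  have hnat : a ≫ εN = g := by
    show R.iStar.map (R.iShriek.map f) ≫ R.adj_i₂.counit.app N = R.adj_i₂.counit.app M ≫ f
    simpa using R.adj_i₂.counit.naturality f
  set t := cokernel.π g with ht
  have hw : a ≫ εN ≫ t = 0 := by
    rw [← Category.assoc, hnat, cokernel.condition]
  have hw2 : εM ≫ f ≫ t = 0 := by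
    rw [← Category.assoc, ← hg, cokernel.condition]
  set e : cokernel a ⟶ cokernel g := cokernel.desc a (εN ≫ t) hw with hedef
  haveI hmonoN : Mono εN := R.mono_counit N
  haveI hmono : Mono e := by
    apply mono_of_zero_of_map_zero
    intro x hx
    obtain ⟨y, rfl⟩ := pseudo_surjective_of_epi (cokernel.π a) x
    rw [← Pseudoelement.comp_apply, hedef, cokernel.π_desc,
      Pseudoelement.comp_apply] at hx
    obtain ⟨z, hz⟩ := pseudo_exact_of_exact (ShortComplex.exact_cokernel g) _ hx
    have h2 : pseudoApply εN (pseudoApply a z) = pseudoApply εN y := by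
      rw [← Pseudoelement.comp_apply, hnat]
      exact hz
    have h3 := pseudo_injective_of_mono εN h2
    rw [← h3, ← Pseudoelement.comp_apply, cokernel.condition, Pseudoelement.zero_apply]
  set r : cokernel εM ⟶ cokernel g := cokernel.desc εM (f ≫ t) hw2 with hrdef
  haveI : Epi r := by
    haveI : Epi (cokernel.π εM ≫ r) := by
      rw [hrdef, cokernel.π_desc]
      exact epi_comp f t
    exact epi_of_epi (cokernel.π εM) r
  haveI : Epi (pullback.snd r e) := Abelian.epi_pullback_of_epi_f r e
  haveI : Mono (pullback.fst r e) := pullback.fst_of_mono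
  have hSzero : IsZero (R.iShriek.obj (pullback r e)) :=
    IsZero.of_mono (R.iShriek.map (pullback.fst r e)) (R.isZero_iShriek_cokernel_counit M)
  have hSC : IsZero (R.iUp.obj (pullback r e)) := h _ hSzero
  have hQ : IsZero (R.iUp.obj (cokernel a)) :=
    IsZero.of_epi (R.iUp.map (pullback.snd r e)) hSC
  have hiso : R.iStar.obj (cokernel (R.iShriek.map f)) ≅ cokernel a :=
    PreservesCokernel.iso R.iStar _
  have e2 : R.iUp.obj (R.iStar.obj (cokernel (R.iShriek.map f)))
      ≅ cokernel (R.iShriek.map f) := asIso (R.adj_i₁.counit.app _)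
  have hV : IsZero (cokernel (R.iShriek.map f)) :=
    IsZero.of_iso hQ (e2.symm ≪≫ R.iUp.mapIso hiso)
  exact epi_of_isZero_cokernel' _ hV


/-- Forward direction: if `i^!` is exact then `F ⊆ C`. -/
lemma isZero_iUp_of_isZero_iShriek [PreservesFiniteColimits R.iShriek]
    (M : A) (hM : IsZero (R.iShriek.obj M)) : IsZero (R.iUp.obj M) := by
  haveI := R.iStar_full; haveI := R.iStar_faithful
  haveI : PreservesColimits R.iUp := R.adj_i₁.leftAdjoint_preservesColimits
  haveI : PreservesColimits R.jUp := R.adj_j₂.leftAdjoint_preservesColimits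
  haveI : R.iUp.Additive := additive_of_finColim _
  haveI : R.jUp.Additive := additive_of_finColim _
  haveI : R.iStar.Additive := by
    haveI : PreservesLimits R.iStar := R.adj_i₁.rightAdjoint_preservesLimits
    exact additive_of_finLim _
  set η := R.adj_i₁.unit.app M with hη
  haveI : Epi η := by
    apply epi_of_isZero_cokernel'
    have hD1 : IsZero (R.iUp.obj (cokernel η)) := by
      have hiso : IsIso (R.iUp.map η) := by
        have tri := R.adj_i₁.left_triangle_components M
        haveI : IsIso (R.adj_i₁.counit.app (R.iUp.obj M)) := inferInstance
        haveI : IsIso (R.iUp.map η ≫ R.adj_i₁.counit.app (R.iUp.obj M)) := by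
          rw [hη, tri]; exact IsIso.id _
        exact IsIso.of_isIso_comp_right (R.iUp.map η) (R.adj_i₁.counit.app (R.iUp.obj M))
      have e : R.iUp.obj (cokernel η) ≅ cokernel (R.iUp.map η) :=
        PreservesCokernel.iso R.iUp η
      exact IsZero.of_iso (isZero_cokernel_of_epi' (R.iUp.map η)) e
    have hD2 : IsZero (R.jUp.obj (cokernel η)) := by
      have e : R.jUp.obj (cokernel η) ≅ cokernel (R.jUp.map η) :=
        PreservesCokernel.iso R.jUp η
      refine IsZero.of_iso ?_ e
      exact IsZero.of_epi (cokernel.π (R.jUp.map η)) (R.isZero_jUp_iStar _)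
    -- cokernel η is in the essential image of i_*, and killed by i^*, hence zero
    obtain ⟨W, ⟨φ⟩⟩ := (R.essImage_iff _).2 hD2
    have hW : IsZero W := by
      haveI : IsIso (R.adj_i₁.counit.app W) := inferInstance
      have eW : R.iUp.obj (R.iStar.obj W) ≅ W := asIso (R.adj_i₁.counit.app W)
      exact IsZero.of_iso hD1 (eW.symm ≪≫ R.iUp.mapIso φ)
    exact IsZero.of_iso (R.iStar.map_isZero hW) φ.symm
  have hepi : Epi (R.iShriek.map η) := inferInstance
  have h2 : IsZero (R.iShriek.obj (R.iStar.obj (R.iUp.obj M))) :=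
    IsZero.of_epi (R.iShriek.map η) hM
  haveI : IsIso (R.adj_i₂.unit.app (R.iUp.obj M)) := inferInstance
  have e : R.iUp.obj M ≅ R.iShriek.obj (R.iStar.obj (R.iUp.obj M)) :=
    asIso (R.adj_i₂.unit.app (R.iUp.obj M))
  exact IsZero.of_iso h2 e

end Recollement

/-- In a recollement of abelian categories, `i^!` is exact iff `F ⊆ C`,
where `(C, T, F) = (Ker i^*, Im i_*, Ker i^!)` is the associated TTF triple. -/
theorem recollement_iShriek_exact_iff [Abelian Y] [Abelian A] [Abelian X]
    (R : Recollement Y A X) :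
    IsExactFunctor R.iShriek ↔ ∀ M : A, R.F M → R.C M := by
  constructor
  · rintro ⟨-, ⟨hFC⟩⟩ M hM
    exact R.isZero_iUp_of_isZero_iShriek M hM
  · intro h
    haveI : PreservesLimits R.iShriek := R.adj_i₂.rightAdjoint_preservesLimits
    haveI : R.iShriek.Additive := additive_of_finLim _
    haveI : R.iShriek.PreservesEpimorphisms :=
      ⟨fun f hf => by haveI := hf; exact R.epi_iShriek_map h f⟩
    haveI : ∀ {P Q : A} (f : P ⟶ Q), PreservesLimit (parallelPair f 0) R.iShriek :=
      fun f => inferInstance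
    haveI := Functor.preservesHomology_of_preservesEpis_and_kernels R.iShriek
    exact ⟨⟨inferInstance⟩, ⟨Functor.preservesFiniteColimits_of_preservesHomology R.iShriek⟩⟩
end

section
/- Let (Y, A, X) be a recollement of abelian categories, and let Λ be a small category. If A has exact Λ-colimits (Λ-colimits exist and the colimit functor [Λ, A] → A is exact), then Y and X have exact Λ-colimits. -/
open CategoryTheory Limits

universe v u u₁ u₂ u₃

variable {Y : Type u₁} {A : Type u₂} {X : Type u₃}
  [Category.{v} Y] [Category.{v} A] [Category.{v} X]

/-- An abelian category has exact `Λ`-colimits if `Λ`-colimits exist and the colimit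
functor `(Λ ⥤ C) ⥤ C` is exact (being a left adjoint it is automatically right exact,
so exactness amounts to preservation of finite limits). -/
structure HasExactColimitsOfShape' (Λ : Type v) [SmallCategory Λ]
    (C : Type u) [Category.{v} C] [Abelian C] : Prop where
  hasColimitsOfShape : HasColimitsOfShape Λ C
  exact' : letI := hasColimitsOfShape
    Nonempty (PreservesFiniteLimits (colim (J := Λ) (C := C)))

/-- An abelian category has exact `Λ`-limits if `Λ`-limits exist and the limit functor
`(Λ ⥤ C) ⥤ C` is exact (being a right adjoint it is automatically left exact, so
exactness amounts to preservation of finite colimits). -/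
structure HasExactLimitsOfShape' (Λ : Type v) [SmallCategory Λ]
    (C : Type u) [Category.{v} C] [Abelian C] : Prop where
  hasLimitsOfShape : HasLimitsOfShape Λ C
  exact' : letI := hasLimitsOfShape
    Nonempty (PreservesFiniteColimits (lim (J := Λ) (C := C)))


/-!
Both `i_*` and `j^*` have adjoints on both sides, so they are exact and preserve colimits.
Since `i_*` is fully faithful and exact, it computes `Λ`-colimits of `Y` inside `A` and reflects
their left exactness. The functor `j_*` exhibits `X` as a reflective subcategory of `A` whose
reflector `j^*` is exact, so `colim_X ≅ j^* ∘ colim_A ∘ j_*` is left exact.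
-/

theorem HasExactColimitsOfShape'.hasExactColimitsOfShape {Λ : Type v} [SmallCategory Λ]
    {C : Type u} [Category.{v} C] [Abelian C] (h : HasExactColimitsOfShape' Λ C) :
    letI := h.hasColimitsOfShape
    HasExactColimitsOfShape Λ C :=
  letI := h.hasColimitsOfShape
  ⟨h.exact'.some⟩

theorem HasExactColimitsOfShape'.of_hasExactColimitsOfShape (Λ : Type v) [SmallCategory Λ]
    (C : Type u) [Category.{v} C] [Abelian C] [HasColimitsOfShape Λ C]
    [HasExactColimitsOfShape Λ C] : HasExactColimitsOfShape' Λ C :=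
  ⟨inferInstance, ⟨inferInstance⟩⟩

namespace Recollement

theorem hasExactColimitsOfShape'_left [Abelian Y] [Abelian A] (R : Recollement Y A X)
    (Λ : Type v) [SmallCategory Λ] [HasColimitsOfShape Λ A] [HasExactColimitsOfShape Λ A] :
    HasExactColimitsOfShape' Λ Y := by
  have := R.iStar_full
  have := R.iStar_faithful
  have : Reflective R.iStar := { L := R.iUp, adj := R.adj_i₁ }
  have : HasColimitsOfShape Λ Y := hasColimitsOfShape_of_reflective R.iStar
  have : PreservesColimitsOfSize.{v, v} R.iStar := R.adj_i₂.leftAdjoint_preservesColimits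
  have : PreservesLimitsOfSize.{v, v} R.iStar := R.adj_i₁.rightAdjoint_preservesLimits
  have := HasExactColimitsOfShape.domain_of_functor Λ R.iStar
  exact .of_hasExactColimitsOfShape Λ Y

theorem hasExactColimitsOfShape'_right [Abelian A] [Abelian X] (R : Recollement Y A X)
    (Λ : Type v) [SmallCategory Λ] [HasColimitsOfShape Λ A] [HasExactColimitsOfShape Λ A] :
    HasExactColimitsOfShape' Λ X := by
  have := R.jRight_full
  have := R.jRight_faithful
  have : Reflective R.jRight := { L := R.jUp, adj := R.adj_j₂ }
  have : HasColimitsOfShape Λ X := hasColimitsOfShape_of_reflective R.jRight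
  have : PreservesLimitsOfSize.{v, v} R.jUp := R.adj_j₁.rightAdjoint_preservesLimits
  have := R.adj_j₂.hasExactColimitsOfShape Λ
  exact .of_hasExactColimitsOfShape Λ X

end Recollement

/-- In a recollement of abelian categories, if the middle term has exact `Λ`-colimits,
then so do the outer terms. -/
theorem recollement_hasExactColimitsOfShape [Abelian Y] [Abelian A] [Abelian X]
    (R : Recollement Y A X) (Λ : Type v) [SmallCategory Λ]
    (hA : HasExactColimitsOfShape' Λ A) :
    HasExactColimitsOfShape' Λ Y ∧ HasExactColimitsOfShape' Λ X := by
  have := hA.hasColimitsOfShape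
  have := hA.hasExactColimitsOfShape
  exact ⟨R.hasExactColimitsOfShape'_left Λ, R.hasExactColimitsOfShape'_right Λ⟩
end

section
/- Let (Y, A, X) be a recollement of abelian categories, and let Λ be a small category. If A has exact Λ-limits, then Y and X have exact Λ-limits. -/
open CategoryTheory Limits

universe v u u₁ u₂ u₃

variable {Y : Type u₁} {A : Type u₂} {X : Type u₃}
  [Category.{v} Y] [Category.{v} A] [Category.{v} X]

/-!
`Y` is a reflective subcategory of `A` via `i^* ⊣ i_*`, and `X` is a coreflective one via
`j_! ⊣ j^*`. Since `i_*` and `j^*` are right adjoints they commute with limits, and the units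
and counits at the fully faithful functors are isomorphisms, so
`lim_Y ≅ i^* ∘ lim_A ∘ (i_* ∘ -)` and `lim_X ≅ j^* ∘ lim_A ∘ (j_! ∘ -)`.
Each factor is right exact: `i^*` and `j_!` as left adjoints, and `i_*` and `j^*` as the
left adjoints of `i^!` and `j_*`.
-/

theorem hasExactLimitsOfShape'_iff {Λ : Type v} [SmallCategory Λ] {C : Type u} [Category.{v} C]
    [Abelian C] [HasLimitsOfShape Λ C] :
    HasExactLimitsOfShape' Λ C ↔ HasExactLimitsOfShape Λ C :=
  ⟨fun h => ⟨h.exact'.some⟩, fun h => ⟨inferInstance, ⟨h.preservesFiniteColimits⟩⟩⟩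

namespace CategoryTheory.Adjunction

variable {C D : Type*} [Category* C] [Category* D] {F : C ⥤ D} {G : D ⥤ C}

theorem hasExactLimitsOfShape_of_reflective (adj : F ⊣ G) [G.Full] [G.Faithful]
    (J : Type*) [Category* J] [HasLimitsOfShape J C] [HasLimitsOfShape J D]
    [HasExactLimitsOfShape J C] [HasFiniteColimits D] [PreservesFiniteColimits G] :
    HasExactLimitsOfShape J D := by
  have := adj.isLeftAdjoint
  have := adj.isRightAdjoint
  have := HasExactLimitsOfShape.preservesFiniteColimits (J := J) (C := C)
  have : PreservesFiniteColimits ((Functor.whiskeringRight J D C).obj G) :=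
    ⟨fun _ _ _ => inferInstance⟩
  let e : (lim : (J ⥤ D) ⥤ D) ≅ (Functor.whiskeringRight J D C).obj G ⋙ lim ⋙ F :=
    (Functor.rightUnitor _).symm ≪≫ Functor.isoWhiskerLeft lim (asIso adj.counit).symm ≪≫
      (Functor.associator _ _ _).symm ≪≫ Functor.isoWhiskerRight (preservesLimitNatIso G) F ≪≫
      Functor.associator _ _ _
  exact ⟨preservesFiniteColimits_of_natIso e.symm⟩

end CategoryTheory.Adjunction

namespace Recollement

variable (R : Recollement Y A X)

instance : Reflective R.iStar :=
  { R.iStar_full, R.iStar_faithful with L := R.iUp, adj := R.adj_i₁ }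

instance : Coreflective R.jLower :=
  { R.jLower_full, R.jLower_faithful with R := R.jUp, adj := R.adj_j₁ }

instance inst_s7 : R.iStar.IsLeftAdjoint := R.adj_i₂.isLeftAdjoint

instance inst_s7_2 : R.jUp.IsLeftAdjoint := R.adj_j₂.isLeftAdjoint

end Recollement

/-- In a recollement of abelian categories, if the middle term has exact `Λ`-limits,
then so do the outer terms. -/
theorem recollement_hasExactLimitsOfShape [Abelian Y] [Abelian A] [Abelian X]
    (R : Recollement Y A X) (Λ : Type v) [SmallCategory Λ]
    (hA : HasExactLimitsOfShape' Λ A) :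
    HasExactLimitsOfShape' Λ Y ∧ HasExactLimitsOfShape' Λ X := by
  have := hA.hasLimitsOfShape
  have := hasExactLimitsOfShape'_iff.mp hA
  have := hasLimitsOfShape_of_reflective (J := Λ) R.iStar
  have := hasLimitsOfShape_of_coreflective (J := Λ) R.jLower
  exact ⟨hasExactLimitsOfShape'_iff.mpr (R.adj_i₁.hasExactLimitsOfShape_of_reflective Λ),
    hasExactLimitsOfShape'_iff.mpr (R.adj_j₁.hasExactLimitsOfShape Λ)⟩
end

section
/- Let (Y, A, X) be a recollement of abelian categories. If A is AB5 (has exact filtered colimits) then so are X and Y. -/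
open CategoryTheory Limits

universe v u u₁ u₂ u₃

variable {Y : Type u₁} {A : Type u₂} {X : Type u₃}
  [Category.{v} Y] [Category.{v} A] [Category.{v} X]

/-- An abelian category is AB5 if it is cocomplete (AB3) and direct limits over any
directed set are exact. -/
structure IsAB5 (C : Type u) [Category.{v} C] [Abelian C] : Prop where
  hasColimits : HasColimits C
  exactDirected : ∀ (Λ : Type v) [Preorder Λ] [IsDirected Λ (· ≤ ·)] [Nonempty Λ],
    letI := hasColimits
    Nonempty (PreservesFiniteLimits (colim (J := Λ) (C := C)))

/-!
Since `j_*` and `i_*` are fully faithful right adjoints, `X` and `Y` are reflective in `A` and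
inherit its colimits. A colimit in `X` is `j^*` applied to the colimit in `A` of its image under
`j_*`, and `j^*` is exact because it has adjoints on both sides. The functor `i_*` also has
adjoints on both sides, so it is exact and commutes with colimits; being faithful, it reflects
exactness of colimits in `Y` from that in `A`.
-/

lemma CategoryTheory.HasExactColimitsOfShape.of_fullyFaithful_rightAdjoint {C D : Type*}
    [Category* C] [Category* D] (J : Type*) [Category* J] [HasColimitsOfShape J C]
    [HasColimitsOfShape J D] [HasExactColimitsOfShape J C] [HasFiniteLimits D] {L : C ⥤ D}
    {G : D ⥤ C} (adj : L ⊣ G) [G.Full] [G.Faithful] [PreservesFiniteLimits L] :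
    HasExactColimitsOfShape J D := by
  have : G.IsRightAdjoint := adj.isRightAdjoint
  have : L.IsLeftAdjoint := adj.isLeftAdjoint
  have : PreservesFiniteLimits ((Functor.whiskeringRight J D C).obj G) :=
    ⟨fun _ _ _ => inferInstance⟩
  let e : (Functor.whiskeringRight J D C).obj G ⋙ colim ⋙ L ≅ colim :=
    Functor.isoWhiskerLeft _ (preservesColimitNatIso L) ≪≫
      Functor.isoWhiskerRight ((Functor.whiskeringRight J D D).mapIso (asIso adj.counit)) colim
  exact ⟨preservesFiniteLimits_of_natIso e⟩

namespace IsAB5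

variable {C : Type u} [Category.{v} C] [Abelian C] {D : Type u₁} [Category.{v} D] [Abelian D]

lemma hasExactColimitsOfShape (hC : IsAB5 C) (Λ : Type v) [Preorder Λ]
    [IsDirected Λ (· ≤ ·)] [Nonempty Λ] :
    letI := hC.hasColimits
    HasExactColimitsOfShape Λ C :=
  letI := hC.hasColimits
  ⟨(hC.exactDirected Λ).some⟩

lemma of_hasExactColimitsOfShape [HasColimits C]
    (h : ∀ (Λ : Type v) [Preorder Λ] [IsDirected Λ (· ≤ ·)] [Nonempty Λ],
      HasExactColimitsOfShape Λ C) : IsAB5 C :=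
  ⟨inferInstance, fun Λ _ _ _ => ⟨(h Λ).preservesFiniteLimits⟩⟩

lemma of_reflective_of_preservesFiniteLimits (hC : IsAB5 C) {L : C ⥤ D} {G : D ⥤ C}
    (adj : L ⊣ G) [G.Full] [G.Faithful] [PreservesFiniteLimits L] : IsAB5 D := by
  have := hC.hasColimits
  let : Reflective G := ⟨L, adj⟩
  have : HasColimits D := hasColimits_of_reflective G
  refine of_hasExactColimitsOfShape fun Λ _ _ _ => ?_
  have := hC.hasExactColimitsOfShape Λ
  exact .of_fullyFaithful_rightAdjoint Λ adj

lemma of_reflective_of_coreflective (hC : IsAB5 C) {L G' : C ⥤ D} {G : D ⥤ C}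
    (adj₁ : L ⊣ G) (adj₂ : G ⊣ G') [G.Full] [G.Faithful] : IsAB5 D := by
  have := hC.hasColimits
  let : Reflective G := ⟨L, adj₁⟩
  have : HasColimits D := hasColimits_of_reflective G
  have : G.IsRightAdjoint := adj₁.isRightAdjoint
  have : G.IsLeftAdjoint := adj₂.isLeftAdjoint
  refine of_hasExactColimitsOfShape fun Λ _ _ _ => ?_
  have := hC.hasExactColimitsOfShape Λ
  exact .domain_of_functor Λ G

end IsAB5

/-- In a recollement of abelian categories, if the middle term is AB5, then so are the
outer terms. -/
theorem recollement_isAB5 [Abelian Y] [Abelian A] [Abelian X]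
    (R : Recollement Y A X) (hA : IsAB5 A) :
    IsAB5 X ∧ IsAB5 Y := by
  have := R.iStar_full; have := R.iStar_faithful
  have := R.jRight_full; have := R.jRight_faithful
  have := R.adj_j₁.isRightAdjoint
  exact ⟨hA.of_reflective_of_preservesFiniteLimits R.adj_j₂,
    hA.of_reflective_of_coreflective R.adj_i₁ R.adj_i₂⟩
end

section
/- Let (Y, A, X) be a recollement of abelian categories with A AB3, in which i^* is exact. Then for every object M of A, M embeds as a subobject of j_* j^*(M) ⊕ i_* i^*(M). -/
open CategoryTheory Limits

universe v u u₁ u₂ u₃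

variable {Y : Type u₁} {A : Type u₂} {X : Type u₃}
  [Category.{v} Y] [Category.{v} A] [Category.{v} X]

/-- Let `(Y, A, X)` be a recollement of abelian categories with `A` AB3 in which `i^*` is
exact. Then every object `M` of `A` embeds into `j_* j^* M ⊕ i_* i^* M`. -/
theorem recollement_mono_into_biproduct [Abelian Y] [Abelian A] [Abelian X]
    (R : Recollement Y A X) [HasCoproducts.{v} A]
    (hi : IsExactFunctor R.iUp) (M : A) :
    ∃ m : M ⟶ (R.jRight.obj (R.jUp.obj M)) ⊞ (R.iStar.obj (R.iUp.obj M)), Mono m := by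
  obtain ⟨⟨hl⟩, -⟩ := hi
  have : R.iUp.IsLeftAdjoint := R.adj_i₁.isLeftAdjoint
  have : R.jUp.IsLeftAdjoint := R.adj_j₂.isLeftAdjoint
  have : R.iStar.IsRightAdjoint := R.adj_i₁.isRightAdjoint
  have : R.jRight.IsRightAdjoint := R.adj_j₂.isRightAdjoint
  have hjm : R.jUp.PreservesMonomorphisms :=
    Functor.preservesMonomorphisms_of_adjunction R.adj_j₁
  refine ⟨biprod.lift (R.adj_j₂.unit.app M) (R.adj_i₁.unit.app M), ?_⟩
  apply Preadditive.mono_of_cancel_zero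
  intro N g hg
  have hg1 : g ≫ R.adj_j₂.unit.app M = 0 := by
    simpa using hg =≫ biprod.fst
  have hg2 : g ≫ R.adj_i₁.unit.app M = 0 := by
    simpa using hg =≫ biprod.snd
  -- factor g through its image
  set h : image g ⟶ M := image.ι g with hh
  have hfac : factorThruImage g ≫ h = g := image.fac g
  have hh1 : h ≫ R.adj_j₂.unit.app M = 0 := by
    rw [← cancel_epi (factorThruImage g), reassoc_of% hfac]
    simpa using hg1
  have hh2 : h ≫ R.adj_i₁.unit.app M = 0 := by
    rw [← cancel_epi (factorThruImage g), reassoc_of% hfac]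
    simpa using hg2
  -- j^* h = 0
  have hj0 : R.jUp.map h = 0 := by
    have := (R.adj_j₂.homEquiv (image g) (R.jUp.obj M)).injective (a₁ := R.jUp.map h) (a₂ := 0)
    apply this
    rw [Adjunction.homEquiv_unit, Adjunction.homEquiv_unit]
    simp [← R.adj_j₂.unit.naturality h, hh1]
  have hi0 : R.iUp.map h = 0 := by
    have := (R.adj_i₁.homEquiv (image g) (R.iUp.obj M)).injective (a₁ := R.iUp.map h) (a₂ := 0)
    apply this
    rw [Adjunction.homEquiv_unit, Adjunction.homEquiv_unit]
    simp [← R.adj_i₁.unit.naturality h, hh2]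
  -- j^* (image g) is zero, so image g is in the essential image of i_*
  have hjz : IsZero (R.jUp.obj (image g)) := by
    have : Mono (R.jUp.map h) := R.jUp.map_mono h
    exact IsZero.of_mono_eq_zero _ hj0
  obtain ⟨Z, ⟨e⟩⟩ := (R.essImage_iff (image g)).mpr hjz
  -- i^* (image g) is zero
  have hiz : IsZero (R.iUp.obj (image g)) := by
    have : Mono (R.iUp.map h) := R.iUp.map_mono h
    exact IsZero.of_mono_eq_zero _ hi0
  -- hence Z is zero, via the counit iso of adj_i₁ (i_* fully faithful)
  have : R.iStar.Full := R.iStar_full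
  have : R.iStar.Faithful := R.iStar_faithful
  have hZ : IsZero Z := by
    have hc : IsIso (R.adj_i₁.counit.app Z) := inferInstance
    have e2 : R.iUp.obj (R.iStar.obj Z) ≅ R.iUp.obj (image g) := R.iUp.mapIso e
    exact (hiz.of_iso e2).of_iso (asIso (R.adj_i₁.counit.app Z)).symm
  have hIm : IsZero (image g) := (R.iStar.map_isZero hZ).of_iso e.symm
  have : h = 0 := hIm.eq_of_src h 0
  rw [← hfac, this, comp_zero]
end

section
/- Let (Y, A, X) be a recollement of abelian categories in which i^! : A → Y is exact and A is AB3. If G_X is a generator of X and G_Y is a generator of Y, then j_! G_X ⊕ i_* G_Y is a generator of A. -/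
open CategoryTheory Limits

universe v u u₁ u₂ u₃

variable {Y : Type u₁} {A : Type u₂} {X : Type u₃}
  [Category.{v} Y] [Category.{v} A] [Category.{v} X]

/-- An object `G` of an abelian category is a generator if every nonzero morphism is
detected by a morphism out of `G`. -/
def IsGenerator {C : Type u} [Category.{v} C] [Abelian C] (G : C) : Prop :=
  ∀ ⦃M N : C⦄ (φ : M ⟶ N), φ ≠ 0 → ∃ h : G ⟶ M, h ≫ φ ≠ 0

/-- Let `(Y, A, X)` be a recollement of abelian categories with `A` AB3 in which `i^!` is
exact. If `G_X` and `G_Y` are generators of `X` and `Y`, then `j_! G_X ⊕ i_* G_Y` is a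
generator of `A`. -/
theorem recollement_generator_of_iShriek_exact [Abelian Y] [Abelian A] [Abelian X]
    (R : Recollement Y A X) [HasCoproducts.{v} A]
    (hi : IsExactFunctor R.iShriek) (GX : X) (GY : Y)
    (hGX : IsGenerator GX) (hGY : IsGenerator GY) :
    IsGenerator (R.jLower.obj GX ⊞ R.iStar.obj GY) := by
  haveI := R.iStar_full
  haveI := R.iStar_faithful
  haveI : PreservesFiniteColimits R.iShriek := hi.2.some
  haveI : PreservesFiniteLimits R.iShriek := hi.1.some
  haveI : PreservesLimitsOfSize.{0, 0} R.jUp := R.adj_j₁.rightAdjoint_preservesLimits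
  haveI : PreservesColimitsOfSize.{0, 0} R.jUp := R.adj_j₂.leftAdjoint_preservesColimits
  haveI : PreservesLimitsOfSize.{0, 0} R.iStar := R.adj_i₁.rightAdjoint_preservesLimits
  intro M N φ hφ
  by_cases hj : R.jUp.map φ = 0
  · -- the image of `φ` lies in `T = Im i_*`; use the `i_* G_Y` summand
    have hfac : factorThruImage φ ≫ image.ι φ = φ := image.fac φ
    have hι0 : R.jUp.map (image.ι φ) = 0 := by
      have h0 : R.jUp.map (factorThruImage φ) ≫ R.jUp.map (image.ι φ) = 0 := by
        rw [← R.jUp.map_comp, hfac, hj]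
      exact zero_of_epi_comp _ h0
    have hz : IsZero (R.jUp.obj (image φ)) := by
      rw [IsZero.iff_id_eq_zero, ← cancel_mono (R.jUp.map (image.ι φ))]
      simp [hι0]
    obtain ⟨Z, ⟨e⟩⟩ := (R.essImage_iff (image φ)).2 hz
    set p' : M ⟶ R.iStar.obj Z := factorThruImage φ ≫ e.inv with hp'
    haveI : Epi p' := epi_comp _ _
    haveI : Epi (R.iShriek.map p') := R.iShriek.map_epi p'
    have hne : R.iShriek.map p' ≠ 0 := by
      intro h0
      -- then the target of this epi is zero, so `Z = 0`, so `image φ = 0`, so `φ = 0`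
      have htz : IsZero (R.iShriek.obj (R.iStar.obj Z)) := by
        rw [IsZero.iff_id_eq_zero, ← cancel_epi (R.iShriek.map p')]
        simp [h0]
      have hZ : IsZero Z := htz.of_iso (asIso (R.adj_i₂.unit.app Z))
      have himz : IsZero (image φ) :=
        (R.iStar.map_isZero hZ).of_iso e.symm
      exact hφ (by rw [← hfac, himz.eq_of_src (image.ι φ) 0, comp_zero])
    obtain ⟨g, hg⟩ := hGY (R.iShriek.map p') hne
    set gA : R.iStar.obj GY ⟶ M := (R.adj_i₂.homEquiv GY M).symm g with hgA
    have h1 : gA ≫ p' ≠ 0 := by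
      intro h0
      apply hg
      have hnat := R.adj_i₂.homEquiv_naturality_right gA p'
      rw [h0] at hnat
      rw [Equiv.apply_symm_apply] at hnat
      rw [← hnat, Adjunction.homEquiv_unit]
      simp
    have h2 : gA ≫ factorThruImage φ ≠ 0 := by
      intro h0
      apply h1
      rw [hp', ← Category.assoc, h0, zero_comp]
    have h3 : gA ≫ φ ≠ 0 := by
      intro h0
      apply h2
      rw [← cancel_mono (image.ι φ), Category.assoc, hfac, h0, zero_comp]
    refine ⟨biprod.snd ≫ gA, ?_⟩
    intro h0
    apply h3
    have : biprod.inr ≫ ((biprod.snd : R.jLower.obj GX ⊞ R.iStar.obj GY ⟶ _) ≫ gA) ≫ φ = biprod.inr ≫ (0 : R.jLower.obj GX ⊞ R.iStar.obj GY ⟶ N) := by rw [h0]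
    simpa using this
  · -- `j^* φ ≠ 0`; use the `j_! G_X` summand
    obtain ⟨g, hg⟩ := hGX (R.jUp.map φ) hj
    set gA : R.jLower.obj GX ⟶ M := (R.adj_j₁.homEquiv GX M).symm g with hgA
    have h3 : gA ≫ φ ≠ 0 := by
      intro h0
      apply hg
      have hnat := R.adj_j₁.homEquiv_naturality_right gA φ
      rw [h0] at hnat
      rw [Equiv.apply_symm_apply] at hnat
      rw [← hnat, Adjunction.homEquiv_unit]
      simp
    refine ⟨biprod.fst ≫ gA, ?_⟩
    intro h0
    apply h3
    have : biprod.inl ≫ ((biprod.fst : R.jLower.obj GX ⊞ R.iStar.obj GY ⟶ _) ≫ gA) ≫ φ = biprod.inl ≫ (0 : R.jLower.obj GX ⊞ R.iStar.obj GY ⟶ N) := by rw [h0]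
    simpa using this
end
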